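/- Let (L, F, τ) be a probabilistic n-normed space with τ continuous, where L has finite dimension d (2 ≤ d < ∞) and fixed basis {u₁,…,u_d}. Then a sequence (x_m) in L converges to x ∈ L (i.e. F_{x_m−x,y₂,…,yₙ} → H₀ weakly for all y₂,…,yₙ ∈ L) if and only if lim_{m→∞} F_{x_m−x,y₂,…,y_{n−1},u_i} = H₀ (weakly, i.e. F_{x_m−x,y₂,…,y_{n−1},u_i}(t) → 1 for every t > 0) for every y₂,…,y_{n−1} ∈ L and every i = 1,…,d. -/

import Mathlib

open Filter Topology

noncomputable section

/-- The maximal distribution function `H₀`: `0` for `t ≤ 0` and `1` for `t > 0`. -/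
def H0 : ℝ → ℝ := fun t => if 0 < t then 1 else 0

/-- A distribution function in `Δ⁺`: nondecreasing, with values in `[0,1]` and `F 0 = 0`. -/
def IsDistFun (F : ℝ → ℝ) : Prop :=
  Monotone F ∧ (∀ t, 0 ≤ F t) ∧ (∀ t, F t ≤ 1) ∧ F 0 = 0

/-- Weak convergence of a sequence of distribution functions:
pointwise convergence at every continuity point of the limit. -/
def WeakTendsto (Fk : ℕ → ℝ → ℝ) (F : ℝ → ℝ) : Prop :=
  ∀ t : ℝ, ContinuousAt F t → Tendsto (fun k => Fk k t) atTop (𝓝 (F t))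

/-- A triangle function on `Δ⁺`: associative, commutative, nondecreasing in each
argument, with `H₀` as unit. -/
def IsTriangleFun (τ : (ℝ → ℝ) → (ℝ → ℝ) → (ℝ → ℝ)) : Prop :=
  (∀ F G, IsDistFun F → IsDistFun G → IsDistFun (τ F G)) ∧
  (∀ F G H, IsDistFun F → IsDistFun G → IsDistFun H →
    τ (τ F G) H = τ F (τ G H)) ∧
  (∀ F G, IsDistFun F → IsDistFun G → τ F G = τ G F) ∧
  (∀ F G H, IsDistFun F → IsDistFun G → IsDistFun H →
    (∀ t, F t ≤ G t) → ∀ t, τ F H t ≤ τ G H t) ∧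
  (∀ F, IsDistFun F → τ F H0 = F)

/-- Continuity of a triangle function with respect to weak convergence on `Δ⁺`. -/
def ContinuousTriangleFun (τ : (ℝ → ℝ) → (ℝ → ℝ) → (ℝ → ℝ)) : Prop :=
  ∀ (Fk Gk : ℕ → ℝ → ℝ) (F G : ℝ → ℝ),
    (∀ m, IsDistFun (Fk m)) → (∀ m, IsDistFun (Gk m)) →
    IsDistFun F → IsDistFun G →
    WeakTendsto Fk F → WeakTendsto Gk G →
    WeakTendsto (fun m => τ (Fk m) (Gk m)) (τ F G)

/-- A probabilistic `n`-norm, for `n = k + 2`, on a real vector space `L`: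
a map `F : Lⁿ → Δ⁺` satisfying (Pn-N1)–(Pn-N5). -/
def IsProbNNorm {L : Type*} [AddCommGroup L] [Module ℝ L] (k : ℕ)
    (F : (Fin (k + 2) → L) → ℝ → ℝ)
    (τ : (ℝ → ℝ) → (ℝ → ℝ) → (ℝ → ℝ)) : Prop :=
  (∀ xs, IsDistFun (F xs)) ∧
  -- (Pn-N1)
  (∀ xs : Fin (k + 2) → L, ¬ LinearIndependent ℝ xs → F xs = H0) ∧
  -- (Pn-N2)
  (∀ xs : Fin (k + 2) → L, LinearIndependent ℝ xs → F xs ≠ H0) ∧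
  -- (Pn-N3)
  (∀ (xs : Fin (k + 2) → L) (σ : Equiv.Perm (Fin (k + 2))), F (xs ∘ σ) = F xs) ∧
  -- (Pn-N4)
  (∀ (α : ℝ) (x : L) (ys : Fin (k + 1) → L) (t : ℝ), α ≠ 0 → 0 < t →
    F (Fin.cons (α • x) ys) t = F (Fin.cons x ys) (t / |α|)) ∧
  -- (Pn-N5)
  (∀ (x y : L) (ys : Fin (k + 1) → L) (t : ℝ),
    τ (F (Fin.cons x ys)) (F (Fin.cons y ys)) t ≤ F (Fin.cons (x + y) ys) t)

/-- Convergence of a sequence in a probabilistic `n`-normed space: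
`F_{x_m − x, y₂, …, yₙ} → H₀` weakly, i.e. the value at every `t > 0` tends to `1`. -/
def PConvergesTo {L : Type*} [AddCommGroup L] [Module ℝ L] (k : ℕ)
    (F : (Fin (k + 2) → L) → ℝ → ℝ) (xm : ℕ → L) (x : L) : Prop :=
  ∀ (ys : Fin (k + 1) → L) (t : ℝ), 0 < t →
    Tendsto (fun m => F (Fin.cons (xm m - x) ys) t) atTop (𝓝 1)

/-- The derived norm `F^∞` with respect to the basis `u`: the pointwise supremum
of `F_{x, y₂, …, y_{n−1}, u_i}` over all `y₂, …, y_{n−1} ∈ L` and `i = 1, …, d`. -/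
def derivedNorm {L : Type*} [AddCommGroup L] [Module ℝ L] (k d : ℕ)
    (F : (Fin (k + 2) → L) → ℝ → ℝ) (u : Module.Basis (Fin d) ℝ L) (x : L) : ℝ → ℝ :=
  fun t => ⨆ (ys : Fin k → L) (i : Fin d), F (Fin.cons x (Fin.snoc ys (u i))) t

/-!
One direction is a specialisation. For the other, fix `x_m - x` in the first slot and
`y₂, …, y_{n-1}` in the middle ones; the vectors `v` for which `F_{x_m - x, y₂, …, y_{n-1}, v} → H₀`
form a subspace of `L`. Indeed `v = 0` gives a linearly dependent family, scaling `v` only rescales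
`t` by (Pn-N3) and (Pn-N4), and sums are handled by (Pn-N5) together with continuity of `τ` and
`τ(H₀, H₀) = H₀`. This subspace contains the basis, hence is all of `L`.
-/

lemma isDistFun_H0 : IsDistFun H0 := by
  refine ⟨fun a b hab => ?_, fun t => ?_, fun t => ?_, by simp [H0]⟩
  · unfold H0
    split_ifs <;> norm_num
    linarith
  all_goals unfold H0; split_ifs <;> norm_num

lemma continuousAt_H0_of_pos {t : ℝ} (ht : 0 < t) : ContinuousAt H0 t :=
  continuousAt_const.congr <| eventually_of_mem (Ioi_mem_nhds ht) fun _ hs => (if_pos hs).symm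

lemma not_continuousAt_H0_zero : ¬ ContinuousAt H0 0 := by
  intro h
  have hlim : Tendsto H0 (𝓝[>] 0) (𝓝 0) := by
    simpa [H0] using h.tendsto.mono_left nhdsWithin_le_nhds
  have hone : Tendsto H0 (𝓝[>] (0 : ℝ)) (𝓝 1) :=
    tendsto_const_nhds.congr' <| eventually_nhdsWithin_of_forall fun _ hs => (if_pos hs).symm
  exact one_ne_zero (tendsto_nhds_unique hone hlim)

lemma IsDistFun.eq_zero_of_nonpos {G : ℝ → ℝ} (hG : IsDistFun G) {t : ℝ} (ht : t ≤ 0) :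
    G t = 0 :=
  le_antisymm (hG.2.2.2 ▸ hG.1 ht) (hG.2.1 t)

lemma weakTendsto_H0_iff {G : ℕ → ℝ → ℝ} (hG : ∀ m, IsDistFun (G m)) :
    WeakTendsto G H0 ↔ ∀ t, 0 < t → Tendsto (fun m => G m t) atTop (𝓝 1) := by
  refine ⟨fun h t ht => ?_, fun h t hcont => ?_⟩
  · simpa [H0, ht] using h t (continuousAt_H0_of_pos ht)
  rcases lt_trichotomy t 0 with ht | rfl | ht
  · simp [H0, ht.not_gt, (hG _).eq_zero_of_nonpos ht.le]
  · exact absurd hcont not_continuousAt_H0_zero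
  · simpa [H0, ht] using h t ht

lemma Fin.cons_snoc_comp_swap_zero_last {α : Type*} {k : ℕ} (a b : α) (ys : Fin k → α) :
    (Fin.cons a (Fin.snoc ys b) : Fin (k + 2) → α) ∘ Equiv.swap 0 (Fin.last (k + 1)) =
      Fin.cons b (Fin.snoc ys a) := by
  funext j
  rcases eq_or_ne j 0 with rfl | h0
  · simp [← Fin.succ_last]
  rcases eq_or_ne j (Fin.last (k + 1)) with rfl | hl
  · simp [← Fin.succ_last]
  rw [Function.comp_apply, Equiv.swap_apply_of_ne_of_ne h0 hl]
  obtain ⟨i, rfl⟩ := Fin.exists_succ_eq.mpr h0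
  obtain ⟨m, rfl⟩ := Fin.exists_castSucc_eq.mpr fun h : i = Fin.last k => hl (h ▸ Fin.succ_last k)
  simp only [Fin.cons_succ, Fin.snoc_castSucc]

namespace IsProbNNorm

variable {L : Type*} [AddCommGroup L] [Module ℝ L] {k : ℕ} {F : (Fin (k + 2) → L) → ℝ → ℝ}
  {τ : (ℝ → ℝ) → (ℝ → ℝ) → (ℝ → ℝ)}

lemma apply_cons_snoc_comm (hF : IsProbNNorm k F τ) (a b : L) (ys : Fin k → L) :
    F (Fin.cons a (Fin.snoc ys b)) = F (Fin.cons b (Fin.snoc ys a)) := by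
  rw [← hF.2.2.2.1 _ (Equiv.swap 0 (Fin.last (k + 1))), Fin.cons_snoc_comp_swap_zero_last]

lemma apply_cons_snoc_zero (hF : IsProbNNorm k F τ) (a : L) (ys : Fin k → L) :
    F (Fin.cons a (Fin.snoc ys 0)) = H0 :=
  hF.2.1 _ fun hli => hli.ne_zero (Fin.last (k + 1)) <| by
    rw [← Fin.succ_last, Fin.cons_succ, Fin.snoc_last]

lemma apply_cons_snoc_smul (hF : IsProbNNorm k F τ) (a v : L) (ys : Fin k → L) {c : ℝ}
    (hc : c ≠ 0) {t : ℝ} (ht : 0 < t) :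
    F (Fin.cons a (Fin.snoc ys (c • v))) t = F (Fin.cons a (Fin.snoc ys v)) (t / |c|) := by
  rw [hF.apply_cons_snoc_comm, hF.2.2.2.2.1 c v _ t hc ht, hF.apply_cons_snoc_comm]

lemma tau_le_apply_cons_snoc_add (hF : IsProbNNorm k F τ) (a v w : L) (ys : Fin k → L)
    (t : ℝ) :
    τ (F (Fin.cons a (Fin.snoc ys v))) (F (Fin.cons a (Fin.snoc ys w))) t ≤
      F (Fin.cons a (Fin.snoc ys (v + w))) t := by
  simpa only [hF.apply_cons_snoc_comm a] using hF.2.2.2.2.2 v w (Fin.snoc ys a) t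

variable (z : ℕ → L) (ys : Fin k → L)

lemma weakTendsto_cons_snoc_zero (hF : IsProbNNorm k F τ) :
    WeakTendsto (fun m => F (Fin.cons (z m) (Fin.snoc ys 0))) H0 := by
  simp only [hF.apply_cons_snoc_zero]
  exact fun t _ => tendsto_const_nhds

variable {z ys}

lemma weakTendsto_cons_snoc_smul (hF : IsProbNNorm k F τ) {v : L}
    (hv : WeakTendsto (fun m => F (Fin.cons (z m) (Fin.snoc ys v))) H0) (c : ℝ) :
    WeakTendsto (fun m => F (Fin.cons (z m) (Fin.snoc ys (c • v)))) H0 := by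
  rcases eq_or_ne c 0 with rfl | hc
  · simpa only [zero_smul] using hF.weakTendsto_cons_snoc_zero z ys
  rw [weakTendsto_H0_iff fun _ => hF.1 _] at hv ⊢
  intro t ht
  simpa only [hF.apply_cons_snoc_smul _ _ _ hc ht] using hv _ (div_pos ht (abs_pos.mpr hc))

lemma weakTendsto_cons_snoc_add (hF : IsProbNNorm k F τ) (hτ : IsTriangleFun τ)
    (hτc : ContinuousTriangleFun τ) {v w : L}
    (hv : WeakTendsto (fun m => F (Fin.cons (z m) (Fin.snoc ys v))) H0)
    (hw : WeakTendsto (fun m => F (Fin.cons (z m) (Fin.snoc ys w))) H0) :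
    WeakTendsto (fun m => F (Fin.cons (z m) (Fin.snoc ys (v + w)))) H0 := by
  have hτH0 : τ H0 H0 = H0 := hτ.2.2.2.2 H0 isDistFun_H0
  have hsum := hτc _ _ _ _ (fun _ => hF.1 _) (fun _ => hF.1 _) isDistFun_H0 isDistFun_H0 hv hw
  rw [hτH0, weakTendsto_H0_iff fun _ => hτ.1 _ _ (hF.1 _) (hF.1 _)] at hsum
  rw [weakTendsto_H0_iff fun _ => hF.1 _]
  exact fun t ht => tendsto_of_tendsto_of_tendsto_of_le_of_le (hsum t ht) tendsto_const_nhds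
    (fun m => hF.tau_le_apply_cons_snoc_add _ _ _ _ t) (fun m => (hF.1 _).2.2.1 t)

lemma weakTendsto_cons_snoc_of_mem_span (hF : IsProbNNorm k F τ) (hτ : IsTriangleFun τ)
    (hτc : ContinuousTriangleFun τ) {s : Set L}
    (hs : ∀ v ∈ s, WeakTendsto (fun m => F (Fin.cons (z m) (Fin.snoc ys v))) H0) {v : L}
    (hv : v ∈ Submodule.span ℝ s) :
    WeakTendsto (fun m => F (Fin.cons (z m) (Fin.snoc ys v))) H0 := by
  induction hv using Submodule.span_induction with
  | mem v hv => exact hs v hv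
  | zero => exact hF.weakTendsto_cons_snoc_zero z ys
  | add v w _ _ hv hw => exact hF.weakTendsto_cons_snoc_add hτ hτc hv hw
  | smul c v _ hv => exact hF.weakTendsto_cons_snoc_smul hv c

end IsProbNNorm

theorem stmt0_general {L : Type*} [AddCommGroup L] [Module ℝ L] (k d : ℕ)
    (u : Module.Basis (Fin d) ℝ L)
    (τ : (ℝ → ℝ) → (ℝ → ℝ) → (ℝ → ℝ))
    (hτ : IsTriangleFun τ) (hτc : ContinuousTriangleFun τ)
    (F : (Fin (k + 2) → L) → ℝ → ℝ) (hF : IsProbNNorm k F τ)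
    (xm : ℕ → L) (x : L) :
    PConvergesTo k F xm x ↔
      ∀ (ys : Fin k → L) (i : Fin d) (t : ℝ), 0 < t →
        Tendsto (fun m => F (Fin.cons (xm m - x) (Fin.snoc ys (u i))) t)
          atTop (𝓝 1) := by
  have hweak := fun (ys : Fin (k + 1) → L) =>
    weakTendsto_H0_iff (G := fun m => F (Fin.cons (xm m - x) ys)) fun _ => hF.1 _
  refine ⟨fun h ys i => h (Fin.snoc ys (u i)), fun h ys => ?_⟩
  have hbasis : ∀ v ∈ Set.range u,
      WeakTendsto (fun m => F (Fin.cons (xm m - x) (Fin.snoc (Fin.init ys) v))) H0 := by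
    rintro _ ⟨i, rfl⟩
    exact (hweak _).2 (h _ i)
  have hlast : ys (Fin.last k) ∈ Submodule.span ℝ (Set.range u) := u.span_eq ▸ Submodule.mem_top
  have hys := hF.weakTendsto_cons_snoc_of_mem_span hτ hτc hbasis hlast
  rw [Fin.snoc_init_self] at hys
  exact (hweak ys).1 hys

/-- **Lemma 1.** In a finite-dimensional probabilistic `n`-normed space with
continuous `τ` and fixed basis `u₁, …, u_d`, a sequence `(x_m)` converges to `x`
iff `F_{x_m − x, y₂, …, y_{n−1}, u_i} → H₀` for all `y₂, …, y_{n−1} ∈ L` and all `i`. -/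
theorem stmt0 {L : Type*} [AddCommGroup L] [Module ℝ L] (k d : ℕ)
    (hd : 2 ≤ d) (hdn : k + 2 ≤ d) (u : Module.Basis (Fin d) ℝ L)
    (τ : (ℝ → ℝ) → (ℝ → ℝ) → (ℝ → ℝ))
    (hτ : IsTriangleFun τ) (hτc : ContinuousTriangleFun τ)
    (F : (Fin (k + 2) → L) → ℝ → ℝ) (hF : IsProbNNorm k F τ)
    (xm : ℕ → L) (x : L) :
    PConvergesTo k F xm x ↔
      ∀ (ys : Fin k → L) (i : Fin d) (t : ℝ), 0 < t →
        Tendsto (fun m => F (Fin.cons (xm m - x) (Fin.snoc ys (u i))) t)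
          atTop (𝓝 1) :=
  stmt0_general k d u τ hτ hτc F hF xm x
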